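/- arXiv:2405.10094 — 2 statements merged into one kernel-verified Lean document; each statement's English description precedes it below -/
import Mathlib

section
/- Every finite relational instance has a core: a sub-instance J ⊆ I such that I maps homomorphically into J and every homomorphism from J to itself is an isomorphism. -/
structure Inst (T : Type) where
  un : ℕ → T → Prop
  bin : ℕ → T → T → Prop

def IsHom {T : Type} (h : T → T) (I J : Inst T) : Prop :=
  (∀ p t, I.un p t → J.un p (h t)) ∧ (∀ p t s, I.bin p t s → J.bin p (h t) (h s))

/-- The terms occurring in the atoms of an instance. -/
def terms {T : Type} (I : Inst T) : Set T :=
  {t | (∃ p, I.un p t) ∨ (∃ p s, I.bin p t s) ∨ (∃ p s, I.bin p s t)}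

def SubInst {T : Type} (J I : Inst T) : Prop :=
  (∀ p t, J.un p t → I.un p t) ∧ (∀ p t s, J.bin p t s → I.bin p t s)

/-- `g` is an isomorphism from `J` to `K` (bijective on terms, inverse also a homomorphism). -/
def IsIsoOn {T : Type} (g : T → T) (J K : Inst T) : Prop :=
  IsHom g J K ∧ Set.BijOn g (terms J) (terms K) ∧
    ∃ g', IsHom g' K J ∧ Set.InvOn g' g (terms J) (terms K)

/-- `J` is a core of `I`: a sub-instance into which `I` maps homomorphically and
all of whose endo-homomorphisms are isomorphisms. -/
def IsCore {T : Type} (I J : Inst T) : Prop :=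
  SubInst J I ∧ (∃ h, IsHom h I J) ∧ ∀ g, IsHom g J J → IsIsoOn g J J

/-!
Among all endomorphisms `h` of `I`, pick one whose image `J = h(I)` has the fewest atoms. For an
endomorphism `g` of `J`, the map `g ∘ h` is again an endomorphism of `I`, with image `g(J) ⊆ J`;
minimality forces `g(J) = J`. Then `g` maps the finitely many terms of `J` onto themselves, so it
is a bijection on them, and since every atom of `J` is the image of an atom of `J`, its inverse
is a homomorphism as well.
-/

section Homomorphisms

variable {T : Type}

theorem isHom_id (I : Inst T) : IsHom id I I :=
  ⟨fun _ _ ht => ht, fun _ _ _ ht => ht⟩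

theorem IsHom.comp {f g : T → T} {I J K : Inst T} (hg : IsHom g J K) (hf : IsHom f I J) :
    IsHom (g ∘ f) I K :=
  ⟨fun p t ht => hg.1 p (f t) (hf.1 p t ht), fun p t s hts => hg.2 p (f t) (f s) (hf.2 p t s hts)⟩

theorem IsHom.mono_right {h : T → T} {I J K : Inst T} (hh : IsHom h I J) (hJK : SubInst J K) :
    IsHom h I K :=
  ⟨fun p t ht => hJK.1 p _ (hh.1 p t ht), fun p t s hts => hJK.2 p _ _ (hh.2 p t s hts)⟩

end Homomorphisms

namespace Inst

variable {T : Type}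

def unAtoms (I : Inst T) : Set (ℕ × T) := {pt | I.un pt.1 pt.2}

def binAtoms (I : Inst T) : Set (ℕ × T × T) := {x | I.bin x.1 x.2.1 x.2.2}

def AtomsFinite (I : Inst T) : Prop := I.unAtoms.Finite ∧ I.binAtoms.Finite

noncomputable def size (I : Inst T) : ℕ := I.unAtoms.ncard + I.binAtoms.ncard

def image (h : T → T) (I : Inst T) : Inst T where
  un p t := ∃ s, I.un p s ∧ h s = t
  bin p t u := ∃ a b, I.bin p a b ∧ h a = t ∧ h b = u

theorem ext_atoms {I J : Inst T} (hun : I.unAtoms = J.unAtoms) (hbin : I.binAtoms = J.binAtoms) :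
    I = J := by
  obtain ⟨u, b⟩ := I
  obtain ⟨u', b'⟩ := J
  congr
  · funext p t; exact propext (Set.ext_iff.mp hun (p, t))
  · funext p t s; exact propext (Set.ext_iff.mp hbin (p, t, s))

theorem unAtoms_image (h : T → T) (I : Inst T) :
    (I.image h).unAtoms = (fun pt : ℕ × T => (pt.1, h pt.2)) '' I.unAtoms := by
  ext ⟨p, t⟩
  simp [unAtoms, image]

theorem binAtoms_image (h : T → T) (I : Inst T) :
    (I.image h).binAtoms = (fun x : ℕ × T × T => (x.1, h x.2.1, h x.2.2)) '' I.binAtoms := by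
  ext ⟨p, t, u⟩
  simp [binAtoms, image]

theorem image_image (g h : T → T) (I : Inst T) : (I.image h).image g = I.image (g ∘ h) := by
  apply ext_atoms
  · simp only [unAtoms_image, Set.image_image]; rfl
  · simp only [binAtoms_image, Set.image_image]; rfl

theorem terms_image (h : T → T) (I : Inst T) : terms (I.image h) = h '' terms I := by
  ext t
  simp only [terms, image, Set.mem_image]
  aesop

theorem isHom_image (h : T → T) (I : Inst T) : IsHom h I (I.image h) :=
  ⟨fun _ t ht => ⟨t, ht, rfl⟩, fun _ t u htu => ⟨t, u, htu, rfl, rfl⟩⟩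

theorem _root_.IsHom.subInst_image {h : T → T} {I K : Inst T} (hh : IsHom h I K) :
    SubInst (I.image h) K :=
  ⟨by rintro p _ ⟨t, ht, rfl⟩; exact hh.1 p t ht,
   by rintro p _ _ ⟨t, u, htu, rfl, rfl⟩; exact hh.2 p t u htu⟩

theorem AtomsFinite.image {I : Inst T} (hI : I.AtomsFinite) (h : T → T) :
    (I.image h).AtomsFinite := by
  rw [AtomsFinite, unAtoms_image, binAtoms_image]
  exact ⟨hI.1.image _, hI.2.image _⟩

theorem AtomsFinite.terms_finite {I : Inst T} (hI : I.AtomsFinite) : (terms I).Finite := by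
  refine ((hI.1.image Prod.snd).union
    ((hI.2.image (·.2.1)).union (hI.2.image (·.2.2)))).subset ?_
  rintro t (⟨p, hp⟩ | ⟨p, s, hp⟩ | ⟨p, s, hp⟩)
  · exact Or.inl ⟨(p, t), hp, rfl⟩
  · exact Or.inr (Or.inl ⟨(p, t, s), hp, rfl⟩)
  · exact Or.inr (Or.inr ⟨(p, s, t), hp, rfl⟩)

theorem _root_.SubInst.eq_of_size_le {J K : Inst T} (hJK : SubInst J K) (hK : K.AtomsFinite)
    (hle : K.size ≤ J.size) : J = K := by
  have hun : J.unAtoms ⊆ K.unAtoms := fun x hx => hJK.1 _ _ hx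
  have hbin : J.binAtoms ⊆ K.binAtoms := fun x hx => hJK.2 _ _ _ hx
  have := Set.ncard_le_ncard hun hK.1
  have := Set.ncard_le_ncard hbin hK.2
  unfold size at hle
  exact ext_atoms (Set.eq_of_subset_of_ncard_le hun (by omega) hK.1)
    (Set.eq_of_subset_of_ncard_le hbin (by omega) hK.2)

theorem exists_isHom_forall_size_image_le (I : Inst T) :
    ∃ h, IsHom h I I ∧ ∀ h', IsHom h' I I → (I.image h).size ≤ (I.image h').size := by
  obtain ⟨h, hh, hmin⟩ :=
    (measure fun h => (I.image h).size).wf.has_min {h | IsHom h I I} ⟨id, isHom_id I⟩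
  exact ⟨h, hh, fun h' hh' => not_lt.1 (hmin h' hh')⟩

theorem isHom_invFunOn_of_image_eq [Nonempty T] {g : T → T} {J : Inst T}
    (hinj : Set.InjOn g (terms J)) (himg : J.image g = J) :
    IsHom (Function.invFunOn g (terms J)) J J := by
  have hinv : Set.LeftInvOn (Function.invFunOn g (terms J)) g (terms J) :=
    hinj.leftInvOn_invFunOn
  constructor
  · intro p t ht
    obtain ⟨s, hs, rfl⟩ : (J.image g).un p t := by rwa [himg]
    rwa [hinv (Or.inl ⟨p, hs⟩)]
  · intro p t u htu
    obtain ⟨a, b, hab, rfl, rfl⟩ : (J.image g).bin p t u := by rwa [himg]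
    rwa [hinv (Or.inr (Or.inl ⟨p, b, hab⟩)), hinv (Or.inr (Or.inr ⟨p, a, hab⟩))]

theorem isIsoOn_of_image_eq {g : T → T} {J : Inst T} (hJ : (terms J).Finite)
    (hg : IsHom g J J) (himg : J.image g = J) : IsIsoOn g J J := by
  have hterms : g '' terms J = terms J := by rw [← terms_image, himg]
  have hbij : Set.BijOn g (terms J) (terms J) :=
    (hJ.surjOn_iff_bijOn_of_mapsTo (Set.mapsTo_iff_image_subset.2 hterms.subset)).mp hterms.symm.subset
  obtain hT | hT := isEmpty_or_nonempty T
  · exact ⟨hg, hbij, g, hg, isEmptyElim, isEmptyElim⟩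
  · exact ⟨hg, hbij, _, isHom_invFunOn_of_image_eq hbij.injOn himg, hbij.invOn_invFunOn⟩

end Inst

theorem finite_instance_has_core {T : Type} (I : Inst T)
    (hfin_un : {pt : ℕ × T | I.un pt.1 pt.2}.Finite)
    (hfin_bin : {pts : ℕ × T × T | I.bin pts.1 pts.2.1 pts.2.2}.Finite) :
    ∃ J : Inst T, IsCore I J := by
  have hI : I.AtomsFinite := ⟨hfin_un, hfin_bin⟩
  obtain ⟨h, hh, hmin⟩ := I.exists_isHom_forall_size_image_le
  refine ⟨I.image h, hh.subInst_image, ⟨h, I.isHom_image h⟩, fun g hg => ?_⟩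
  have hgh : IsHom (g ∘ h) I I := (hg.mono_right hh.subInst_image).comp (I.isHom_image h)
  have himg : (I.image h).image g = I.image h :=
    hg.subInst_image.eq_of_size_le (hI.image h) (by rw [Inst.image_image]; exact hmin _ hgh)
  exact Inst.isIsoOn_of_image_eq (hI.image h).terms_finite hg himg
end

section
/- If I and J are instances over a purely non-disjunctive (single-head) rule set R, I homomorphically maps into J, and J satisfies all rules of R (no active triggers), then any chase of I with R produces an instance that homomorphically maps into J. -/
/-!
A homomorphism of the chase so far into `J` extends along every chase step: the body match of
the applied trigger, composed with the homomorphism, is a trigger in `J`, and since `J` has no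
active trigger its head is matched in `J`; the fresh terms of the step are sent to the images of
the existential variables under that match, and the terms already present keep their images.
Iterating gives homomorphisms `gᵢ` of the stages `fᵢ`, each agreeing with the previous one on its
terms, so sending a term where the first stage containing it sends it maps the whole chase into `J`.
-/

inductive Atom (X : Type) : Type
  | un : ℕ → X → Atom X
  | bin : ℕ → X → X → Atom X

def Atom.map {X Y : Type} (h : X → Y) : Atom X → Atom Y
  | .un p t => .un p (h t)
  | .bin p t s => .bin p (h t) (h s)

def Atom.vars {X : Type} : Atom X → Set X
  | .un _ t => {t}
  | .bin _ t s => {t, s}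

/-- A non-disjunctive (single-head) existential rule, with variables drawn from `ℕ`. -/
structure Rule where
  body : Set (Atom ℕ)
  head : Set (Atom ℕ)

def Rule.bodyVars (ρ : Rule) : Set ℕ := ⋃ a ∈ ρ.body, a.vars

def Rule.headVars (ρ : Rule) : Set ℕ := ⋃ a ∈ ρ.head, a.vars

def termsOf {T : Type} (I : Set (Atom T)) : Set T := ⋃ a ∈ I, a.vars

/-- `J` satisfies all rules of `R`: no active triggers. -/
def Models {T : Type} (J : Set (Atom T)) (R : Set Rule) : Prop :=
  ∀ ρ ∈ R, ∀ σ : ℕ → T, Atom.map σ '' ρ.body ⊆ J →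
    ∃ σ' : ℕ → T, (∀ v ∈ ρ.bodyVars, σ' v = σ v) ∧ Atom.map σ' '' ρ.head ⊆ J

/-- One chase step: apply an active trigger, introducing fresh terms for the
existential variables. -/
def IsStep {T : Type} (R : Set Rule) (I I' : Set (Atom T)) : Prop :=
  ∃ ρ ∈ R, ∃ σ σ' : ℕ → T,
    Atom.map σ '' ρ.body ⊆ I ∧
    (∀ v ∈ ρ.bodyVars, σ' v = σ v) ∧
    (∀ v ∈ ρ.headVars \ ρ.bodyVars, σ' v ∉ termsOf I) ∧
    Set.InjOn σ' (ρ.headVars \ ρ.bodyVars) ∧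
    I' = I ∪ Atom.map σ' '' ρ.head

theorem Atom.map_map {X Y Z : Type} (g : Y → Z) (k : X → Y) (a : Atom X) :
    Atom.map g (Atom.map k a) = Atom.map (g ∘ k) a := by
  cases a <;> rfl

theorem Atom.map_congr {X Y : Type} {g g' : X → Y} {a : Atom X} (h : Set.EqOn g g' a.vars) :
    Atom.map g a = Atom.map g' a := by
  cases a with
  | un p t => simp [Atom.map, h (show t ∈ ({t} : Set X) from rfl)]
  | bin p t s => simp [Atom.map, h (show t ∈ ({t, s} : Set X) by simp),
      h (show s ∈ ({t, s} : Set X) by simp)]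

theorem Atom.mem_vars_map {X Y : Type} (σ : X → Y) {a : Atom X} {x : X} (hx : x ∈ a.vars) :
    σ x ∈ (Atom.map σ a).vars := by
  cases a with
  | un p t => simp_all [Atom.vars, Atom.map]
  | bin p t s => rcases hx with rfl | rfl <;> simp [Atom.vars, Atom.map]

section Terms

variable {T : Type}

theorem mem_termsOf {I : Set (Atom T)} {a : Atom T} (ha : a ∈ I) {t : T} (ht : t ∈ a.vars) :
    t ∈ termsOf I :=
  Set.mem_biUnion ha ht

theorem termsOf_mono {I I' : Set (Atom T)} (h : I ⊆ I') : termsOf I ⊆ termsOf I' :=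
  Set.biUnion_subset_biUnion_left h

theorem map_mem_termsOf_of_mem_bodyVars {ρ : Rule} {σ : ℕ → T} {I : Set (Atom T)}
    (hbody : Atom.map σ '' ρ.body ⊆ I) {v : ℕ} (hv : v ∈ ρ.bodyVars) : σ v ∈ termsOf I := by
  obtain ⟨a, ha, hva⟩ := Set.mem_iUnion₂.1 hv
  exact mem_termsOf (hbody ⟨a, ha, rfl⟩) (Atom.mem_vars_map σ hva)

end Terms

namespace IsStep

variable {T : Type} {R : Set Rule} {I I' J : Set (Atom T)}

theorem subset (hstep : IsStep R I I') : I ⊆ I' := by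
  obtain ⟨_, _, _, _, _, _, _, _, rfl⟩ := hstep
  exact Set.subset_union_left

theorem exists_extension (hstep : IsStep R I I') (hJ : Models J R) {g : T → T}
    (hg : Atom.map g '' I ⊆ J) :
    ∃ g' : T → T, Atom.map g' '' I' ⊆ J ∧ Set.EqOn g' g (termsOf I) := by
  classical
  obtain ⟨ρ, hρ, σ, σ', hbody, hagree, hfresh, hinj, rfl⟩ := hstep
  obtain ⟨τ, hτ, hhead⟩ := hJ ρ hρ (g ∘ σ) (by
    rintro _ ⟨a, ha, rfl⟩
    rw [← Atom.map_map]
    exact hg ⟨_, hbody ⟨a, ha, rfl⟩, rfl⟩)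
  set S := ρ.headVars \ ρ.bodyVars
  let g' : T → T := (σ' '' S).piecewise (τ ∘ Function.invFunOn σ' S) g
  have hold : Set.EqOn g' g (termsOf I) := fun t ht =>
    Set.piecewise_eq_of_notMem _ _ _ (by rintro ⟨v, hv, rfl⟩; exact hfresh v hv ht)
  have hnew : Set.EqOn (g' ∘ σ') τ ρ.headVars := by
    intro v hv
    by_cases hvb : v ∈ ρ.bodyVars
    · simp only [Function.comp_apply, hagree v hvb,
        hold (map_mem_termsOf_of_mem_bodyVars hbody hvb), hτ v hvb]
    · have hvS : v ∈ S := ⟨hv, hvb⟩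
      simp only [Function.comp_apply, g',
        Set.piecewise_eq_of_mem _ _ _ (Set.mem_image_of_mem σ' hvS),
        hinj.leftInvOn_invFunOn hvS]
  refine ⟨g', ?_, hold⟩
  rintro _ ⟨a, ha | ⟨b, hb, rfl⟩, rfl⟩
  · rw [Atom.map_congr fun t ht => hold (mem_termsOf ha ht)]
    exact hg ⟨a, ha, rfl⟩
  · rw [Atom.map_map, Atom.map_congr fun v hv => hnew (Set.mem_biUnion hb hv)]
    exact hhead ⟨b, hb, rfl⟩

end IsStep

theorem exists_map_iUnion_subset {T : Type} {f : ℕ → Set (Atom T)} {J : Set (Atom T)}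
    (hf : Monotone f) (g : ℕ → T → T) (hg : ∀ i, Atom.map (g i) '' f i ⊆ J)
    (hcompat : ∀ i, Set.EqOn (g (i + 1)) (g i) (termsOf (f i))) :
    ∃ h : T → T, Atom.map h '' (⋃ i, f i) ⊆ J := by
  classical
  have hagree : ∀ {i j}, i ≤ j → Set.EqOn (g j) (g i) (termsOf (f i)) := by
    intro i j hij
    induction j, hij using Nat.le_induction with
    | base => exact Set.eqOn_refl _ _
    | succ j hij ih => exact ((hcompat j).mono (termsOf_mono (hf hij))).trans ih
  refine ⟨fun t => if ht : ∃ i, t ∈ termsOf (f i) then g (Nat.find ht) t else t, ?_⟩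
  rintro _ ⟨a, ha, rfl⟩
  obtain ⟨i, hai⟩ := Set.mem_iUnion.1 ha
  have hfirst : Set.EqOn (fun t => if ht : ∃ i, t ∈ termsOf (f i) then g (Nat.find ht) t else t)
      (g i) a.vars := by
    intro t ht
    have hex : ∃ k, t ∈ termsOf (f k) := ⟨i, mem_termsOf hai ht⟩
    simp only [dif_pos hex]
    exact (hagree (Nat.find_min' hex (mem_termsOf hai ht)) (Nat.find_spec hex)).symm
  rw [Atom.map_congr hfirst]
  exact hg i ⟨a, hai, rfl⟩

theorem chase_universality {T : Type} (R : Set Rule) (I J : Set (Atom T))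
    (f : ℕ → Set (Atom T)) (hf0 : f 0 = I)
    (hstep : ∀ i, f (i + 1) = f i ∨ IsStep R (f i) (f (i + 1)))
    (h0 : T → T) (hh0 : Atom.map h0 '' I ⊆ J)
    (hJ : Models J R) :
    ∃ h : T → T, Atom.map h '' (⋃ i, f i) ⊆ J := by
  have hmono : Monotone f :=
    monotone_nat_of_le_succ fun i => (hstep i).elim (fun h => h.ge) IsStep.subset
  have hext : ∀ i (g : T → T), Atom.map g '' f i ⊆ J →
      ∃ g' : T → T, Atom.map g' '' f (i + 1) ⊆ J ∧ Set.EqOn g' g (termsOf (f i)) := by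
    intro i g hg
    rcases hstep i with h | h
    · exact ⟨g, h ▸ hg, Set.eqOn_refl _ _⟩
    · exact h.exists_extension hJ hg
  choose! F hF hFg using hext
  let g : ℕ → T → T := fun n => Nat.rec (motive := fun _ => T → T) h0 F n
  have hg : ∀ i, Atom.map (g i) '' f i ⊆ J := by
    intro i
    induction i with
    | zero => rwa [hf0]
    | succ i ih => exact hF i _ ih
  exact exists_map_iUnion_subset hmono g hg fun i => hFg i _ (hg i)
end
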